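/- For every q ≥ 0, the set of q-dimensional W-critical simplices of X̃ is exactly Crit_q^{W_Ā}(Ā) ∪ Crit_q^{W_B̄}(B̄) ∪ { [ā_{i₀}, b̄_{i₀}, …, b̄_{i_{q−1}}] : [c̄_{i₀},…,c̄_{i_{q−1}}] ∈ Crit_{q−1}^{W_(A∩B)‾}((A∩B)‾) }. -/
import Mathlib


open scoped Classical

noncomputable section

namespace DMT

variable {V : Type*} {U : Type*}

/-- An abstract simplicial complex: a nonempty collection of nonempty finite
sets of vertices that is closed under taking nonempty subsets. -/
def IsComplex (K : Set (Finset V)) : Prop :=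
  K.Nonempty ∧ ∀ σ ∈ K, σ.Nonempty ∧ ∀ τ : Finset V, τ ⊆ σ → τ.Nonempty → τ ∈ K

/-- The incidence number `⟨τ, σ⟩` of `σ` with respect to `τ`, where simplices are
oriented by listing their vertices increasingly: it is `(-1)^i` if `σ` is obtained
from `τ` by deleting the `i`-th vertex, and `0` if `σ` is not a facet of `τ`. -/
def incidence [LinearOrder V] (τ σ : Finset V) : ℤ :=
  if σ ⊆ τ ∧ τ.card = σ.card + 1 then
    ∑ v ∈ τ \ σ, (-1 : ℤ) ^ (τ.filter fun u => u < v).card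
  else 0

/-- A discrete vector field on a complex `K`: a set of pairs `(σ, τ)` of simplices of `K`
with `σ` a facet of `τ`, such that every simplex appears in at most one pair. -/
def IsDVF (K : Set (Finset U)) (W : Set (Finset U × Finset U)) : Prop :=
  (∀ p ∈ W, p.1 ∈ K ∧ p.2 ∈ K ∧ p.1 ⊆ p.2 ∧ p.2.card = p.1.card + 1) ∧
  ∀ p ∈ W, ∀ p' ∈ W, (p.1 = p'.1 ∨ p.1 = p'.2 ∨ p.2 = p'.1 ∨ p.2 = p'.2) → p = p'

/-- A simplex is critical for `W` if it appears in no pair of `W`. -/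
def IsCritical (W : Set (Finset U × Finset U)) (σ : Finset U) : Prop :=
  ∀ p ∈ W, p.1 ≠ σ ∧ p.2 ≠ σ

/-- The set of `q`-dimensional `W`-critical simplices of `K`. -/
def critSet (K : Set (Finset U)) (W : Set (Finset U × Finset U)) (q : ℕ) : Set (Finset U) :=
  {σ | σ ∈ K ∧ σ.card = q + 1 ∧ IsCritical W σ}

/-- A `W`-trajectory `τ₀, σ₁, τ₁, …, σ_k, τ_k`. -/
structure Traj (W : Set (Finset U × Finset U)) where
  k : ℕ
  t : ℕ → Finset U
  s : ℕ → Finset U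
  dim_t : ∀ i ≤ k, (t i).card = (t 0).card
  dim_s : ∀ i, 1 ≤ i → i ≤ k → (s i).card + 1 = (t 0).card
  mem : ∀ i, 1 ≤ i → i ≤ k → (s i, t i) ∈ W
  sub : ∀ i, 1 ≤ i → i ≤ k → s i ⊆ t (i - 1)
  nmem : ∀ i, 1 ≤ i → i ≤ k → (s i, t (i - 1)) ∉ W

/-- `W` is acyclic: there is no nontrivial closed `W`-trajectory. -/
def IsAcyclic (W : Set (Finset U × Finset U)) : Prop :=
  ¬ ∃ P : Traj W, 1 < P.k ∧ P.t 0 = P.t P.k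

/-- A gradient vector field on `K`: an acyclic discrete vector field. -/
def IsGVF (K : Set (Finset U)) (W : Set (Finset U × Finset U)) : Prop :=
  IsDVF K W ∧ IsAcyclic W

/-- An extended `W`-trajectory `τ₀, σ₁, τ₁, …, σ_k, τ_k, σ_{k+1}`, with
`(σᵢ, τᵢ) ∈ W` for `1 ≤ i ≤ k`, and `σᵢ ⊆ τ_{i-1}`, `(σᵢ, τ_{i-1}) ∉ W` for
`1 ≤ i ≤ k + 1`.  (The values of `t` and `s` outside the relevant ranges are
normalized to `∅`.) -/
structure ExtTraj (W : Set (Finset U × Finset U)) where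
  k : ℕ
  t : ℕ → Finset U
  s : ℕ → Finset U
  dim_t : ∀ i ≤ k, (t i).card = (t 0).card
  dim_s : ∀ i, 1 ≤ i → i ≤ k + 1 → (s i).card + 1 = (t 0).card
  mem : ∀ i, 1 ≤ i → i ≤ k → (s i, t i) ∈ W
  sub : ∀ i, 1 ≤ i → i ≤ k + 1 → s i ⊆ t (i - 1)
  nmem : ∀ i, 1 ≤ i → i ≤ k + 1 → (s i, t (i - 1)) ∉ W
  pad_t : ∀ i, k < i → t i = ∅
  pad_s : ∀ i, i = 0 ∨ k + 1 < i → s i = ∅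

/-- The weight of an extended trajectory. -/
def ExtTraj.weight [LinearOrder U] {W : Set (Finset U × Finset U)} (P : ExtTraj W) : ℤ :=
  (∏ i ∈ Finset.range P.k,
      -(incidence (P.t i) (P.s (i + 1)) * incidence (P.t (i + 1)) (P.s (i + 1)))) *
    incidence (P.t P.k) (P.s (P.k + 1))

/-- `Γ(τ, σ)`: the extended `W`-trajectories with initial simplex `τ` and terminal
simplex `σ`. -/
def Gamma (W : Set (Finset U × Finset U)) (τ σ : Finset U) : Set (ExtTraj W) :=
  {P | P.t 0 = τ ∧ P.s (P.k + 1) = σ}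

/-- The Thom–Smale boundary coefficient `Σ_{P ∈ Γ(τ,σ)} w(P)`. -/
def tsCoeff [LinearOrder U] (W : Set (Finset U × Finset U)) (τ σ : Finset U) : ℤ :=
  ∑ᶠ P ∈ Gamma W τ σ, ExtTraj.weight P

/-- The copy of a complex under a vertex map. -/
def copy [DecidableEq U] (f : V → U) (K : Set (Finset V)) : Set (Finset U) :=
  {σ | ∃ γ ∈ K, σ = γ.image f}

/-- Pull a simplex of a copy back to the original vertex set. -/
def pull [Fintype V] [DecidableEq U] (f : V → U) (σ : Finset U) : Finset V :=
  Finset.univ.filter fun v => f v ∈ σ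

/-- The ground simplex of a simplex of the prism (with `a`-vertices and `b`-vertices). -/
def GS [Fintype V] [DecidableEq U] (a b : V → U) (σ : Finset U) : Finset V :=
  Finset.univ.filter fun v => a v ∈ σ ∨ b v ∈ σ

/-- The simplex `{a_{i₀}, …, a_{i_r}, b_{i_r}, …, b_{i_q}}` of the prism over
`γ = {v_{i₀} < … < v_{i_q}}`, with pivot `v = v_{i_r}`. -/
def mixA [LinearOrder V] [DecidableEq U] (a b : V → U) (γ : Finset V) (v : V) : Finset U :=
  (γ.filter fun u => u ≤ v).image a ∪ (γ.filter fun u => v ≤ u).image b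

/-- The simplex `{a_{i₀}, …, a_{i_{r-1}}, b_{i_r}, …, b_{i_q}}` of the prism over
`γ`, with pivot `v = v_{i_r}`. -/
def mixB [LinearOrder V] [DecidableEq U] (a b : V → U) (γ : Finset V) (v : V) : Finset U :=
  (γ.filter fun u => u < v).image a ∪ (γ.filter fun u => v ≤ u).image b

/-- `A_γ`. -/
def AsetOf [LinearOrder V] [DecidableEq U] (a b : V → U) (γ : Finset V) : Set (Finset U) :=
  {σ | ∃ v ∈ γ, σ = mixA a b γ v}

/-- `B_γ`. -/
def BsetOf [LinearOrder V] [DecidableEq U] (a b : V → U) (γ : Finset V) : Set (Finset U) :=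
  {σ | ∃ v ∈ γ, σ = mixB a b γ v} ∪ {γ.image a}

/-- `S_γ = A_γ ∪ B_γ`. -/
def SsetOf [LinearOrder V] [DecidableEq U] (a b : V → U) (γ : Finset V) : Set (Finset U) :=
  AsetOf a b γ ∪ BsetOf a b γ

/-- The prism `ℙ(C)` over the complex `C`, realized with `a`-vertices and `b`-vertices. -/
def prism [LinearOrder V] [DecidableEq U] (a b : V → U) (C : Set (Finset V)) :
    Set (Finset U) :=
  ⋃ γ ∈ C, SsetOf a b γ

/-- The interior simplices of the prism. -/
def prismInt [LinearOrder V] [DecidableEq U] (a b : V → U) (C : Set (Finset V)) :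
    Set (Finset U) :=
  prism a b C \ (copy a C ∪ copy b C)

/-- The complex `X̃ = Ā ∪ ℙ((A ∩ B)‾) ∪ B̄`. -/
def tilde [LinearOrder V] [DecidableEq U] (a b : V → U) (A B : Set (Finset V)) :
    Set (Finset U) :=
  copy a A ∪ prism a b (A ∩ B) ∪ copy b B

/-- The prism pairing `𝒱`: for each `γ ∈ C` and `v ∈ γ`, the pair
`([a_{i₀},…,a_{i_{r-1}}, b_{i_r},…,b_{i_q}], [a_{i₀},…,a_{i_r}, b_{i_r},…,b_{i_q}])`. -/
def prismVF [LinearOrder V] [DecidableEq U] (a b : V → U) (C : Set (Finset V)) :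
    Set (Finset U × Finset U) :=
  {p | ∃ γ ∈ C, ∃ v ∈ γ, p = (mixB a b γ v, mixA a b γ v)}

/-- `v` is the minimum vertex of `γ`. -/
def isMin [Preorder V] (γ : Finset V) (v : V) : Prop :=
  v ∈ γ ∧ ∀ u ∈ γ, v ≤ u

/-- The pairing `W'` of the interior simplices of the prism, induced by the gradient
vector field `WC` on the copy (under `c`) of the intersection complex `C`. -/
def WprimeSet [Fintype V] [LinearOrder V] [DecidableEq U] (a b c : V → U)
    (C : Set (Finset V)) (WC : Set (Finset U × Finset U)) : Set (Finset U × Finset U) :=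
  {p | ∃ pr ∈ WC, ∃ v, isMin (pull c pr.1) v ∧
      p = (mixA a b (pull c pr.1) v, mixA a b (pull c pr.2) v)} ∪
  {p | ∃ pr ∈ WC, ∃ v vm am, isMin (pull c pr.2) vm ∧ isMin (pull c pr.1) am ∧
      v ∈ pull c pr.2 ∧ v ≠ vm ∧
      p = (mixB a b (pull c pr.2) v, mixA a b (pull c pr.2) (if v = am then vm else v))} ∪
  {p | ∃ pr ∈ WC, ∃ v am, isMin (pull c pr.1) am ∧ v ∈ pull c pr.1 ∧ v ≠ am ∧
      p = (mixB a b (pull c pr.1) v, mixA a b (pull c pr.1) v)} ∪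
  {p | ∃ γ : Finset V, γ ∈ C ∧ IsCritical WC (γ.image c) ∧
      ∃ v vm, isMin γ vm ∧ v ∈ γ ∧ v ≠ vm ∧ p = (mixB a b γ v, mixA a b γ v)}

/-- The discrete vector field `W = W_Ā ∪ W_B̄ ∪ W'` on `X̃`. -/
def Wfield [Fintype V] [LinearOrder V] [DecidableEq U] (a b c : V → U)
    (C : Set (Finset V)) (WA WB WC : Set (Finset U × Finset U)) :
    Set (Finset U × Finset U) :=
  WA ∪ WB ∪ WprimeSet a b c C WC

/-- Transfer a simplex of the copy under `c` to the corresponding simplex of the copy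
under `f`. -/
def transferMap [Fintype V] [DecidableEq U] (c f : V → U) (σ : Finset U) : Finset U :=
  (pull c σ).image f

/-- A mixed (Mayer–Vietoris) trajectory: a descending extended trajectory
`τ₀, σ₁, τ₁, …, σ_p, τ_p` for `WC` in the copy of the intersection, transferred by
`tr` into another copy, followed by an ascending path
`τ'_p, α_p, τ'_{p+1}, …, α_{p+l-1}, τ'_{p+l}` for `WD`. -/
structure MixTraj (WC WD : Set (Finset U × Finset U)) (tr : Finset U → Finset U) where
  p : ℕ
  l : ℕ
  t : ℕ → Finset U
  s : ℕ → Finset U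
  t' : ℕ → Finset U
  a' : ℕ → Finset U
  dim_t : ∀ i ≤ p, (t i).card = (t 0).card
  dim_s : ∀ i, 1 ≤ i → i ≤ p → (s i).card + 1 = (t 0).card
  dim_t' : ∀ i, p ≤ i → i ≤ p + l → (t' i).card = (t 0).card
  dim_a' : ∀ i, p ≤ i → i < p + l → (a' i).card = (t 0).card + 1
  mem_s : ∀ i, 1 ≤ i → i ≤ p → (s i, t i) ∈ WC
  sub_s : ∀ i, 1 ≤ i → i ≤ p → s i ⊆ t (i - 1)
  nmem_s : ∀ i, 1 ≤ i → i ≤ p → (s i, t (i - 1)) ∉ WC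
  link : t' p = tr (t p)
  mem_a : ∀ i, p ≤ i → i < p + l → (t' i, a' i) ∈ WD
  sub_a : ∀ i, p + 1 ≤ i → i ≤ p + l → t' i ⊆ a' (i - 1)
  nmem_a : ∀ i, p + 1 ≤ i → i ≤ p + l → (t' i, a' (i - 1)) ∉ WD
  pad_t : ∀ i, p < i → t i = ∅
  pad_s : ∀ i, i = 0 ∨ p < i → s i = ∅
  pad_t' : ∀ i, i < p ∨ p + l < i → t' i = ∅
  pad_a' : ∀ i, i < p ∨ p + l ≤ i → a' i = ∅

/-- The product of incidence signs along a mixed trajectory (without the leading sign). -/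
def MixTraj.wcore [LinearOrder U] {WC WD : Set (Finset U × Finset U)}
    {tr : Finset U → Finset U} (P : MixTraj WC WD tr) : ℤ :=
  (∏ i ∈ Finset.range P.p,
      -(incidence (P.t i) (P.s (i + 1)) * incidence (P.t (i + 1)) (P.s (i + 1)))) *
  ∏ i ∈ Finset.range P.l,
      -(incidence (P.a' (P.p + i)) (P.t' (P.p + i)) *
        incidence (P.a' (P.p + i)) (P.t' (P.p + i + 1)))

/-- A Mayer–Vietoris trajectory: one of the five kinds. -/
inductive MVTraj (WA WB WC : Set (Finset U × Finset U)) (trA trB : Finset U → Finset U)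
  | viaA : ExtTraj WA → MVTraj WA WB WC trA trB
  | viaB : ExtTraj WB → MVTraj WA WB WC trA trB
  | viaC : ExtTraj WC → MVTraj WA WB WC trA trB
  | crossA : MixTraj WC WA trA → MVTraj WA WB WC trA trB
  | crossB : MixTraj WC WB trB → MVTraj WA WB WC trA trB

/-- The weight `w_M` of a Mayer–Vietoris trajectory. -/
def MVTraj.wM [LinearOrder U] {WA WB WC : Set (Finset U × Finset U)}
    {trA trB : Finset U → Finset U} : MVTraj WA WB WC trA trB → ℤ
  | .viaA P => P.weight
  | .viaB P => P.weight
  | .viaC P => -P.weight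
  | .crossA P => -P.wcore
  | .crossB P => P.wcore

/-- A Mayer–Vietoris trajectory goes from `β` to `α` (with the required criticality of
the endpoints in the respective copies `Abar`, `Bbar`, `Cbar`). -/
def MVTraj.ends {WA WB WC : Set (Finset U × Finset U)} {trA trB : Finset U → Finset U}
    (Abar Bbar Cbar : Set (Finset U)) :
    MVTraj WA WB WC trA trB → Finset U → Finset U → Prop
  | .viaA T, β, α => T.t 0 = β ∧ T.s (T.k + 1) = α ∧
      β ∈ Abar ∧ IsCritical WA β ∧ α ∈ Abar ∧ IsCritical WA α
  | .viaB T, β, α => T.t 0 = β ∧ T.s (T.k + 1) = α ∧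
      β ∈ Bbar ∧ IsCritical WB β ∧ α ∈ Bbar ∧ IsCritical WB α
  | .viaC T, β, α => T.t 0 = β ∧ T.s (T.k + 1) = α ∧
      β ∈ Cbar ∧ IsCritical WC β ∧ α ∈ Cbar ∧ IsCritical WC α
  | .crossA T, β, α => T.t 0 = β ∧ T.t' (T.p + T.l) = α ∧
      β ∈ Cbar ∧ IsCritical WC β ∧ α ∈ Abar ∧ IsCritical WA α
  | .crossB T, β, α => T.t 0 = β ∧ T.t' (T.p + T.l) = α ∧
      β ∈ Cbar ∧ IsCritical WC β ∧ α ∈ Bbar ∧ IsCritical WB α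

/-- `MV(β, α)`: the set of Mayer–Vietoris trajectories from `β` to `α`. -/
def MVset (WA WB WC : Set (Finset U × Finset U)) (trA trB : Finset U → Finset U)
    (Abar Bbar Cbar : Set (Finset U)) (β α : Finset U) :
    Set (MVTraj WA WB WC trA trB) :=
  {P | MVTraj.ends Abar Bbar Cbar P β α}

/-- The Mayer–Vietoris boundary coefficient `Σ_{P ∈ MV(β,α)} w_M(P)`. -/
def mvCoeff [LinearOrder U] (WA WB WC : Set (Finset U × Finset U))
    (trA trB : Finset U → Finset U) (Abar Bbar Cbar : Set (Finset U))
    (β α : Finset U) : ℤ :=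
  ∑ᶠ P ∈ MVset WA WB WC trA trB Abar Bbar Cbar β α, MVTraj.wM P

/-- The generating sets `D_q(X)`. -/
def Dset (Abar Bbar Cbar : Set (Finset U)) (WA WB WC : Set (Finset U × Finset U)) :
    ℕ → Set (Finset U)
  | 0 => critSet Abar WA 0 ∪ critSet Bbar WB 0
  | (q + 1) => critSet Abar WA (q + 1) ∪ critSet Bbar WB (q + 1) ∪ critSet Cbar WC q

/-- The `q`-dimensional simplices of a complex. -/
def simpSet (K : Set (Finset V)) (q : ℕ) : Set (Finset V) :=
  {σ | σ ∈ K ∧ σ.card = q + 1}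

/-- The boundary homomorphism of a chain complex of free abelian groups, determined by a
matrix of coefficients. -/
def chainBoundary {ι κ : Type*} (coeff : ι → κ → ℤ) : (ι →₀ ℤ) →ₗ[ℤ] (κ →₀ ℤ) :=
  Finsupp.lsum ℤ fun i =>
    LinearMap.toSpanSingleton ℤ (κ →₀ ℤ) (∑ᶠ j : κ, coeff i j • Finsupp.single j 1)

/-- The family of boundary maps of the chain complex of free abelian groups with
generating sets `S q` and boundary coefficients `coeff` (with the convention that the
boundary in degree `0` is the zero map). -/
def fullBoundary {W : Type*} (S : ℕ → Set (Finset W)) (coeff : Finset W → Finset W → ℤ) :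
    ∀ q : ℕ, ((S q : Set (Finset W)) →₀ ℤ) →+ ((S (q - 1) : Set (Finset W)) →₀ ℤ)
  | 0 => 0
  | (q + 1) => (chainBoundary fun (i : (S (q + 1) : Set (Finset W))) (j : (S q : Set (Finset W))) =>
      coeff (i : Finset W) (j : Finset W)).toAddMonoidHom

/-- `ker d ⧸ im d'`. -/
abbrev homologyAt {L M N : Type*} [AddCommGroup L] [AddCommGroup M] [AddCommGroup N]
    (d : M →+ N) (d' : L →+ M) : Type _ :=
  (↥d.ker) ⧸ (AddSubgroup.comap d.ker.subtype d'.range)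

/-- The `q`-th homology group of the chain complex of free abelian groups with
generating sets `S` and boundary coefficients `coeff`. -/
abbrev homologyOf {W : Type*} (S : ℕ → Set (Finset W)) (coeff : Finset W → Finset W → ℤ)
    (q : ℕ) : Type _ :=
  homologyAt (fullBoundary S coeff q) (fullBoundary S coeff (q + 1))

/-- The map `f` from critical simplices of `X̃` to generators of the Mayer–Vietoris
complex: the identity on critical simplices of `Ā` and `B̄`, and the (copy in
`(A ∩ B)‾` of the) ground simplex on interior critical simplices of the prism. -/
def fmap [Fintype V] [LinearOrder V] [DecidableEq U] (a b c : V → U)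
    (C : Set (Finset V)) (τ : Finset U) : Finset U :=
  if τ ∈ prismInt a b C then (GS a b τ).image c else τ

/-- The simplex `[a_{i₀}, b_{i₀}, …, b_{i_{q-1}}]` of the prism over `γ`. -/
def aMinCopy [Fintype V] [LinearOrder V] [DecidableEq U] (a b : V → U) (γ : Finset V) :
    Finset U :=
  (γ.filter fun u => ∀ w ∈ γ, u ≤ w).image a ∪ γ.image b

/-- The map `g` from generators of the Mayer–Vietoris complex to critical simplices of
`X̃`: the identity on critical simplices of `Ā` and `B̄`, and
`[c_{i₀},…,c_{i_{q-1}}] ↦ [a_{i₀}, b_{i₀}, …, b_{i_{q-1}}]` on critical simplices of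
`(A ∩ B)‾`. -/
def gmap [Fintype V] [LinearOrder V] [DecidableEq U] (a b c : V → U)
    (Cbar : Set (Finset U)) (α : Finset U) : Finset U :=
  if α ∈ Cbar then aMinCopy a b (pull c α) else α


section CritAux

variable {V : Type*} {U : Type*} [Fintype V] [LinearOrder V] [LinearOrder U]
variable {a b c : V → U} {γ γ' : Finset V} {v v' : V}

lemma a_mem_mixA (hia : Function.Injective a) (hab : ∀ u w : V, a u ≠ b w) {u : V} :
    a u ∈ mixA a b γ v ↔ u ∈ γ ∧ u ≤ v := by
  simp only [mixA, Finset.mem_union, Finset.mem_image, Finset.mem_filter]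
  constructor
  · rintro (⟨w, ⟨hw, hwv⟩, he⟩ | ⟨w, ⟨hw, hwv⟩, he⟩)
    · obtain rfl := hia he
      exact ⟨hw, hwv⟩
    · exact absurd he.symm (hab u w)
  · rintro ⟨h1, h2⟩
    exact Or.inl ⟨u, ⟨h1, h2⟩, rfl⟩

lemma b_mem_mixA (hib : Function.Injective b) (hab : ∀ u w : V, a u ≠ b w) {u : V} :
    b u ∈ mixA a b γ v ↔ u ∈ γ ∧ v ≤ u := by
  simp only [mixA, Finset.mem_union, Finset.mem_image, Finset.mem_filter]
  constructor
  · rintro (⟨w, ⟨hw, hwv⟩, he⟩ | ⟨w, ⟨hw, hwv⟩, he⟩)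
    · exact absurd he (hab w u)
    · obtain rfl := hib he
      exact ⟨hw, hwv⟩
  · rintro ⟨h1, h2⟩
    exact Or.inr ⟨u, ⟨h1, h2⟩, rfl⟩

lemma a_mem_mixB (hia : Function.Injective a) (hab : ∀ u w : V, a u ≠ b w) {u : V} :
    a u ∈ mixB a b γ v ↔ u ∈ γ ∧ u < v := by
  simp only [mixB, Finset.mem_union, Finset.mem_image, Finset.mem_filter]
  constructor
  · rintro (⟨w, ⟨hw, hwv⟩, he⟩ | ⟨w, ⟨hw, hwv⟩, he⟩)
    · obtain rfl := hia he
      exact ⟨hw, hwv⟩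
    · exact absurd he.symm (hab u w)
  · rintro ⟨h1, h2⟩
    exact Or.inl ⟨u, ⟨h1, h2⟩, rfl⟩

lemma b_mem_mixB (hib : Function.Injective b) (hab : ∀ u w : V, a u ≠ b w) {u : V} :
    b u ∈ mixB a b γ v ↔ u ∈ γ ∧ v ≤ u := by
  simp only [mixB, Finset.mem_union, Finset.mem_image, Finset.mem_filter]
  constructor
  · rintro (⟨w, ⟨hw, hwv⟩, he⟩ | ⟨w, ⟨hw, hwv⟩, he⟩)
    · exact absurd he (hab w u)
    · obtain rfl := hib he
      exact ⟨hw, hwv⟩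
  · rintro ⟨h1, h2⟩
    exact Or.inr ⟨u, ⟨h1, h2⟩, rfl⟩

lemma mixA_inj (hia : Function.Injective a) (hib : Function.Injective b)
    (hab : ∀ u w : V, a u ≠ b w) (hv : v ∈ γ) (hv' : v' ∈ γ')
    (h : mixA a b γ v = mixA a b γ' v') : γ = γ' ∧ v = v' := by
  have h1 : a v ∈ mixA a b γ' v' := by
    rw [← h]; exact (a_mem_mixA hia hab).2 ⟨hv, le_refl v⟩
  have h2 : b v ∈ mixA a b γ' v' := by
    rw [← h]; exact (b_mem_mixA hib hab).2 ⟨hv, le_refl v⟩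
  have hvv' : v = v' :=
    le_antisymm ((a_mem_mixA hia hab).1 h1).2 ((b_mem_mixA hib hab).1 h2).2
  subst hvv'
  refine ⟨?_, rfl⟩
  ext u
  constructor
  · intro hu
    rcases le_total u v with hle | hle
    · have : a u ∈ mixA a b γ' v := by rw [← h]; exact (a_mem_mixA hia hab).2 ⟨hu, hle⟩
      exact ((a_mem_mixA hia hab).1 this).1
    · have : b u ∈ mixA a b γ' v := by rw [← h]; exact (b_mem_mixA hib hab).2 ⟨hu, hle⟩
      exact ((b_mem_mixA hib hab).1 this).1
  · intro hu
    rcases le_total u v with hle | hle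
    · have : a u ∈ mixA a b γ v := by rw [h]; exact (a_mem_mixA hia hab).2 ⟨hu, hle⟩
      exact ((a_mem_mixA hia hab).1 this).1
    · have : b u ∈ mixA a b γ v := by rw [h]; exact (b_mem_mixA hib hab).2 ⟨hu, hle⟩
      exact ((b_mem_mixA hib hab).1 this).1

lemma mixA_ne_mixB (hia : Function.Injective a) (hib : Function.Injective b)
    (hab : ∀ u w : V, a u ≠ b w) (hv : v ∈ γ) :
    mixA a b γ v ≠ mixB a b γ' v' := by
  intro h
  have h1 : a v ∈ mixB a b γ' v' := by
    rw [← h]; exact (a_mem_mixA hia hab).2 ⟨hv, le_refl v⟩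
  have h2 : b v ∈ mixB a b γ' v' := by
    rw [← h]; exact (b_mem_mixA hib hab).2 ⟨hv, le_refl v⟩
  have hlt : v < v' := ((a_mem_mixB hia hab).1 h1).2
  have hle : v' ≤ v := ((b_mem_mixB hib hab).1 h2).2
  exact absurd hlt (not_lt.2 hle)

lemma card_mixA (hia : Function.Injective a) (hib : Function.Injective b)
    (hab : ∀ u w : V, a u ≠ b w) (hv : v ∈ γ) :
    (mixA a b γ v).card = γ.card + 1 := by
  have hdisj : Disjoint ((γ.filter fun u => u ≤ v).image a)
      ((γ.filter fun u => v ≤ u).image b) := by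
    rw [Finset.disjoint_left]
    rintro x hx1 hx2
    simp only [Finset.mem_image] at hx1 hx2
    obtain ⟨u1, -, rfl⟩ := hx1
    obtain ⟨u2, -, h2⟩ := hx2
    exact hab u1 u2 h2.symm
  rw [mixA, Finset.card_union_of_disjoint hdisj,
    Finset.card_image_of_injective _ hia, Finset.card_image_of_injective _ hib]
  have hu : (γ.filter fun u => u ≤ v) ∪ (γ.filter fun u => v ≤ u) = γ := by
    ext u
    simp only [Finset.mem_union, Finset.mem_filter]
    constructor
    · rintro (⟨h, -⟩ | ⟨h, -⟩) <;> exact h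
    · intro h
      rcases le_total u v with hle | hle
      · exact Or.inl ⟨h, hle⟩
      · exact Or.inr ⟨h, hle⟩
  have hi : (γ.filter fun u => u ≤ v) ∩ (γ.filter fun u => v ≤ u) = {v} := by
    ext u
    simp only [Finset.mem_inter, Finset.mem_filter, Finset.mem_singleton]
    constructor
    · rintro ⟨⟨-, h1⟩, ⟨-, h2⟩⟩
      exact le_antisymm h1 h2
    · rintro rfl
      exact ⟨⟨hv, le_refl u⟩, ⟨hv, le_refl u⟩⟩
  have := Finset.card_union_add_card_inter (γ.filter fun u => u ≤ v)
    (γ.filter fun u => v ≤ u)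
  rw [hu, hi, Finset.card_singleton] at this
  omega

lemma mixB_isMin (hmin : isMin γ v) : mixB a b γ v = γ.image b := by
  have h1 : (γ.filter fun u => u < v) = ∅ := by
    rw [Finset.filter_eq_empty_iff]
    intro u hu
    exact not_lt.2 (hmin.2 u hu)
  have h2 : (γ.filter fun u => v ≤ u) = γ := by
    rw [Finset.filter_eq_self]
    intro u hu
    exact hmin.2 u hu
  rw [mixB, h1, h2, Finset.image_empty, Finset.empty_union]

lemma pull_image (hic : Function.Injective c) (δ : Finset V) : pull c (δ.image c) = δ := by
  ext u
  simp only [pull, Finset.mem_filter, Finset.mem_univ, true_and, Finset.mem_image]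
  constructor
  · rintro ⟨w, hw, he⟩
    obtain rfl := hic he
    exact hw
  · intro h
    exact ⟨u, h, rfl⟩

lemma pull_mono {σ τ : Finset U} (h : σ ⊆ τ) : pull c σ ⊆ pull c τ := by
  intro u hu
  simp only [pull, Finset.mem_filter, Finset.mem_univ, true_and] at hu ⊢
  exact h hu

lemma copy_no_b (hab : ∀ u w : V, a u ≠ b w) {K : Set (Finset V)} {σ : Finset U}
    (h : σ ∈ copy a K) (w : V) : b w ∉ σ := by
  obtain ⟨δ, -, rfl⟩ := h
  intro hw
  simp only [Finset.mem_image] at hw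
  obtain ⟨u, -, he⟩ := hw
  exact hab u w he

lemma copy_no_a (hab : ∀ u w : V, a u ≠ b w) {K : Set (Finset V)} {σ : Finset U}
    (h : σ ∈ copy b K) (w : V) : a w ∉ σ := by
  obtain ⟨δ, -, rfl⟩ := h
  intro hw
  simp only [Finset.mem_image] at hw
  obtain ⟨u, -, he⟩ := hw
  exact hab w u he.symm

lemma isMin_min' {γ : Finset V} (h : γ.Nonempty) : isMin γ (γ.min' h) :=
  ⟨γ.min'_mem h, fun u hu => γ.min'_le u hu⟩

lemma isMin_unique {γ : Finset V} (h1 : isMin γ v) (h2 : isMin γ v') : v = v' :=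
  le_antisymm (h1.2 v' h2.1) (h2.2 v h1.1)

lemma Wprime_vertices {C : Set (Finset V)} {WC : Set (Finset U × Finset U)}
    (hia : Function.Injective a) (hib : Function.Injective b)
    (hab : ∀ u w : V, a u ≠ b w)
    (hsub : ∀ pr ∈ WC, pr.1 ⊆ pr.2) {p : Finset U × Finset U}
    (hp : p ∈ WprimeSet a b c C WC) :
    (∃ w, a w ∈ p.1) ∧ (∃ w, b w ∈ p.1) ∧ (∃ w, a w ∈ p.2) ∧ (∃ w, b w ∈ p.2) := by
  simp only [WprimeSet, Set.mem_union, Set.mem_setOf_eq] at hp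
  rcases hp with ((⟨pr, hpr, w, hwmin, rfl⟩ | ⟨pr, hpr, w, wm, am, hwm, ham, hwmem, hwne, rfl⟩)
      | ⟨pr, hpr, w, am, ham, hw, hwne, rfl⟩) | ⟨δ, hδ, hcr, w, wm, hwm, hw, hwne, rfl⟩
  · have hw2 : w ∈ pull c pr.2 := pull_mono (hsub pr hpr) hwmin.1
    exact ⟨⟨w, (a_mem_mixA hia hab).2 ⟨hwmin.1, le_refl w⟩⟩,
      ⟨w, (b_mem_mixA hib hab).2 ⟨hwmin.1, le_refl w⟩⟩,
      ⟨w, (a_mem_mixA hia hab).2 ⟨hw2, le_refl w⟩⟩,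
      ⟨w, (b_mem_mixA hib hab).2 ⟨hw2, le_refl w⟩⟩⟩
  · have hlt : wm < w := lt_of_le_of_ne (hwm.2 w hwmem) (fun h => hwne h.symm)
    have hwin : (if w = am then wm else w) ∈ pull c pr.2 := by
      split_ifs
      · exact hwm.1
      · exact hwmem
    exact ⟨⟨wm, (a_mem_mixB hia hab).2 ⟨hwm.1, hlt⟩⟩,
      ⟨w, (b_mem_mixB hib hab).2 ⟨hwmem, le_refl w⟩⟩,
      ⟨_, (a_mem_mixA hia hab).2 ⟨hwin, le_refl _⟩⟩,
      ⟨_, (b_mem_mixA hib hab).2 ⟨hwin, le_refl _⟩⟩⟩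
  · have hlt : am < w := lt_of_le_of_ne (ham.2 w hw) (fun h => hwne h.symm)
    exact ⟨⟨am, (a_mem_mixB hia hab).2 ⟨ham.1, hlt⟩⟩,
      ⟨w, (b_mem_mixB hib hab).2 ⟨hw, le_refl w⟩⟩,
      ⟨w, (a_mem_mixA hia hab).2 ⟨hw, le_refl w⟩⟩,
      ⟨w, (b_mem_mixA hib hab).2 ⟨hw, le_refl w⟩⟩⟩
  · have hlt : wm < w := lt_of_le_of_ne (hwm.2 w hw) (fun h => hwne h.symm)
    exact ⟨⟨wm, (a_mem_mixB hia hab).2 ⟨hwm.1, hlt⟩⟩,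
      ⟨w, (b_mem_mixB hib hab).2 ⟨hw, le_refl w⟩⟩,
      ⟨w, (a_mem_mixA hia hab).2 ⟨hw, le_refl w⟩⟩,
      ⟨w, (b_mem_mixA hib hab).2 ⟨hw, le_refl w⟩⟩⟩

end CritAux

/-- For every `q`, the `q`-dimensional `W`-critical simplices of `X̃`
are exactly `Crit_q(Ā) ∪ Crit_q(B̄) ∪ {[ā_i₀, b̄_i₀, …, b̄_i_(q-1)] :
[c̄_i₀, …, c̄_i_(q-1)] ∈ Crit_(q-1)((A∩B)‾)}`. -/
theorem Wfield_critical_simplices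
    {V : Type*} {U : Type*} [Fintype V] [LinearOrder V] [LinearOrder U]
    (X A B : Set (Finset V)) (a b c : V → U)
    (WA WB WC : Set (Finset U × Finset U))
    (hX : IsComplex X) (hA : IsComplex A) (hB : IsComplex B)
    (hUnion : A ∪ B = X)
    (ha : StrictMono a) (hb : StrictMono b) (hc : StrictMono c)
    (hab : ∀ u v : V, a u ≠ b v) (hac : ∀ u v : V, a u ≠ c v)
    (hbc : ∀ u v : V, b u ≠ c v)
    (hWA : IsGVF (copy a A) WA) (hWB : IsGVF (copy b B) WB)
    (hWC : IsGVF (copy c (A ∩ B)) WC) :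
    ∀ q : ℕ,
      critSet (tilde a b A B) (Wfield a b c (A ∩ B) WA WB WC) q =
        critSet (copy a A) WA q ∪ critSet (copy b B) WB q ∪
          {σ | ∃ q' : ℕ, q = q' + 1 ∧
            ∃ γ : Finset V, γ.image c ∈ critSet (copy c (A ∩ B)) WC q' ∧
              ∃ v, isMin γ v ∧ σ = mixA a b γ v} := by
  have hia := ha.injective
  have hib := hb.injective
  have hic := hc.injective
  have hCne : ∀ δ ∈ A ∩ B, δ.Nonempty := fun δ hδ => (hA.2 δ hδ.1).1
  have hAne : ∀ δ ∈ A, δ.Nonempty := fun δ hδ => (hA.2 δ hδ).1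
  have hBne : ∀ δ ∈ B, δ.Nonempty := fun δ hδ => (hB.2 δ hδ).1
  have hWAd := hWA.1.1
  have hWBd := hWB.1.1
  have hWCd := hWC.1.1
  have hsubWC : ∀ pr ∈ WC, pr.1 ⊆ pr.2 := fun pr hpr => (hWCd pr hpr).2.2.1
  have hPR : ∀ pr ∈ WC, (pull c pr.1).image c = pr.1 ∧ (pull c pr.2).image c = pr.2 ∧
      pull c pr.1 ⊆ pull c pr.2 ∧ (pull c pr.1).Nonempty ∧
      pull c pr.1 ∈ A ∩ B ∧ pull c pr.2 ∈ A ∩ B := by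
    intro pr hpr
    obtain ⟨⟨δ1, hδ1, h1⟩, ⟨δ2, hδ2, h2⟩, hsub, -⟩ := hWCd pr hpr
    have e1 : pull c pr.1 = δ1 := by rw [h1, pull_image hic]
    have e2 : pull c pr.2 = δ2 := by rw [h2, pull_image hic]
    refine ⟨by rw [e1, ← h1], by rw [e2, ← h2], pull_mono hsub, ?_, ?_, ?_⟩
    · rw [e1]; exact hCne δ1 hδ1
    · rw [e1]; exact hδ1
    · rw [e2]; exact hδ2
  intro q
  ext σ
  simp only [critSet, Set.mem_setOf_eq, Set.mem_union]
  constructor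
  · rintro ⟨hT, hcard, hcrit⟩
    simp only [tilde, Set.mem_union] at hT
    have goalA : σ ∈ copy a A →
        ((σ ∈ copy a A ∧ σ.card = q + 1 ∧ IsCritical WA σ) ∨
          (σ ∈ copy b B ∧ σ.card = q + 1 ∧ IsCritical WB σ)) ∨
        (∃ q' : ℕ, q = q' + 1 ∧ ∃ γ : Finset V,
          (γ.image c ∈ copy c (A ∩ B) ∧ (γ.image c).card = q' + 1 ∧
            IsCritical WC (γ.image c)) ∧ ∃ v, isMin γ v ∧ σ = mixA a b γ v) :=
      fun h => Or.inl (Or.inl ⟨h, hcard, fun p hp => hcrit p (Or.inl (Or.inl hp))⟩)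
    have goalB : σ ∈ copy b B →
        ((σ ∈ copy a A ∧ σ.card = q + 1 ∧ IsCritical WA σ) ∨
          (σ ∈ copy b B ∧ σ.card = q + 1 ∧ IsCritical WB σ)) ∨
        (∃ q' : ℕ, q = q' + 1 ∧ ∃ γ : Finset V,
          (γ.image c ∈ copy c (A ∩ B) ∧ (γ.image c).card = q' + 1 ∧
            IsCritical WC (γ.image c)) ∧ ∃ v, isMin γ v ∧ σ = mixA a b γ v) :=
      fun h => Or.inl (Or.inr ⟨h, hcard, fun p hp => hcrit p (Or.inl (Or.inr hp))⟩)
    rcases hT with (hT | hT) | hT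
    · exact goalA hT
    · -- σ is in the prism
      simp only [prism, Set.mem_iUnion] at hT
      obtain ⟨γ, hγ, hσS⟩ := hT
      have hγne : γ.Nonempty := hCne γ hγ
      set m := γ.min' hγne with hmdef
      have hmin : isMin γ m := isMin_min' hγne
      simp only [SsetOf, AsetOf, BsetOf, Set.mem_union, Set.mem_setOf_eq,
        Set.mem_singleton_iff] at hσS
      rcases hσS with ⟨v, hv, rfl⟩ | (⟨v, hv, rfl⟩ | rfl)
      · -- σ = mixA a b γ v
        by_cases hvm : v = m
        · subst hvm
          by_cases hex : ∃ pr ∈ WC, pr.1 = γ.image c ∨ pr.2 = γ.image c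
          · exfalso
            obtain ⟨pr, hpr, h1 | h2⟩ := hex
            · obtain ⟨e1, e2, hsub12, hne1, -, -⟩ := hPR pr hpr
              have eγ : pull c pr.1 = γ := by rw [h1, pull_image hic]
              have hp : (mixA a b (pull c pr.1) m, mixA a b (pull c pr.2) m) ∈
                  Wfield a b c (A ∩ B) WA WB WC := by
                refine Or.inr (Or.inl (Or.inl (Or.inl ⟨pr, hpr, m, ?_, rfl⟩)))
                rw [eγ]; exact hmin
              have := (hcrit _ hp).1
              rw [eγ] at this
              exact this rfl
            · obtain ⟨e1, e2, hsub12, hne1, -, -⟩ := hPR pr hpr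
              have eγ : pull c pr.2 = γ := by rw [h2, pull_image hic]
              set am := (pull c pr.1).min' hne1 with hamdef
              have hamin : isMin (pull c pr.1) am := isMin_min' hne1
              by_cases hamm : am = m
              · have hp : (mixA a b (pull c pr.1) am, mixA a b (pull c pr.2) am) ∈
                    Wfield a b c (A ∩ B) WA WB WC :=
                  Or.inr (Or.inl (Or.inl (Or.inl ⟨pr, hpr, am, hamin, rfl⟩)))
                have := (hcrit _ hp).2
                rw [eγ, hamm] at this
                exact this rfl
              · have hamγ : am ∈ γ := by
                  have := hsub12 hamin.1; rwa [eγ] at this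
                have hp : (mixB a b (pull c pr.2) am,
                    mixA a b (pull c pr.2) (if am = am then m else am)) ∈
                    Wfield a b c (A ∩ B) WA WB WC := by
                  refine Or.inr (Or.inl (Or.inl (Or.inr
                    ⟨pr, hpr, am, m, am, ?_, hamin, ?_, hamm, rfl⟩)))
                  · rw [eγ]; exact hmin
                  · rw [eγ]; exact hamγ
                have := (hcrit _ hp).2
                rw [eγ, if_pos rfl] at this
                exact this rfl
          · push_neg at hex
            have hγcard : γ.card = q := by
              have := card_mixA hia hib hab hv
              omega
            have hq1 : 1 ≤ q := by
              have := Finset.card_pos.mpr hγne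
              omega
            refine Or.inr ⟨q - 1, by omega, γ, ⟨⟨γ, hγ, rfl⟩, ?_, hex⟩, m, hmin, rfl⟩
            rw [Finset.card_image_of_injective _ hic]
            omega
        · exfalso
          by_cases hex : ∃ pr ∈ WC, pr.1 = γ.image c ∨ pr.2 = γ.image c
          · obtain ⟨pr, hpr, h1 | h2⟩ := hex
            · obtain ⟨e1, e2, hsub12, hne1, -, -⟩ := hPR pr hpr
              have eγ : pull c pr.1 = γ := by rw [h1, pull_image hic]
              have hp : (mixB a b (pull c pr.1) v, mixA a b (pull c pr.1) v) ∈
                  Wfield a b c (A ∩ B) WA WB WC := by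
                refine Or.inr (Or.inl (Or.inr ⟨pr, hpr, v, m, ?_, ?_, hvm, rfl⟩))
                · rw [eγ]; exact hmin
                · rw [eγ]; exact hv
              have := (hcrit _ hp).2
              rw [eγ] at this
              exact this rfl
            · obtain ⟨e1, e2, hsub12, hne1, -, -⟩ := hPR pr hpr
              have eγ : pull c pr.2 = γ := by rw [h2, pull_image hic]
              set am := (pull c pr.1).min' hne1 with hamdef
              have hamin : isMin (pull c pr.1) am := isMin_min' hne1
              by_cases hva : v = am
              · have hp : (mixA a b (pull c pr.1) am, mixA a b (pull c pr.2) am) ∈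
                    Wfield a b c (A ∩ B) WA WB WC :=
                  Or.inr (Or.inl (Or.inl (Or.inl ⟨pr, hpr, am, hamin, rfl⟩)))
                have := (hcrit _ hp).2
                rw [eγ, ← hva] at this
                exact this rfl
              · have hp : (mixB a b (pull c pr.2) v,
                    mixA a b (pull c pr.2) (if v = am then m else v)) ∈
                    Wfield a b c (A ∩ B) WA WB WC := by
                  refine Or.inr (Or.inl (Or.inl (Or.inr
                    ⟨pr, hpr, v, m, am, ?_, hamin, ?_, hvm, rfl⟩)))
                  · rw [eγ]; exact hmin
                  · rw [eγ]; exact hv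
                have := (hcrit _ hp).2
                rw [eγ, if_neg hva] at this
                exact this rfl
          · push_neg at hex
            have hp : (mixB a b γ v, mixA a b γ v) ∈
                Wfield a b c (A ∩ B) WA WB WC :=
              Or.inr (Or.inr ⟨γ, hγ, hex, v, m, hmin, hv, hvm, rfl⟩)
            exact (hcrit _ hp).2 rfl
      · -- σ = mixB a b γ v
        by_cases hvm : v = m
        · subst hvm
          exact goalB ⟨γ, hγ.2, mixB_isMin hmin⟩
        · exfalso
          by_cases hex : ∃ pr ∈ WC, pr.1 = γ.image c ∨ pr.2 = γ.image c
          · obtain ⟨pr, hpr, h1 | h2⟩ := hex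
            · obtain ⟨e1, e2, hsub12, hne1, -, -⟩ := hPR pr hpr
              have eγ : pull c pr.1 = γ := by rw [h1, pull_image hic]
              have hp : (mixB a b (pull c pr.1) v, mixA a b (pull c pr.1) v) ∈
                  Wfield a b c (A ∩ B) WA WB WC := by
                refine Or.inr (Or.inl (Or.inr ⟨pr, hpr, v, m, ?_, ?_, hvm, rfl⟩))
                · rw [eγ]; exact hmin
                · rw [eγ]; exact hv
              have := (hcrit _ hp).1
              rw [eγ] at this
              exact this rfl
            · obtain ⟨e1, e2, hsub12, hne1, -, -⟩ := hPR pr hpr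
              have eγ : pull c pr.2 = γ := by rw [h2, pull_image hic]
              set am := (pull c pr.1).min' hne1 with hamdef
              have hamin : isMin (pull c pr.1) am := isMin_min' hne1
              have hp : (mixB a b (pull c pr.2) v,
                  mixA a b (pull c pr.2) (if v = am then m else v)) ∈
                  Wfield a b c (A ∩ B) WA WB WC := by
                refine Or.inr (Or.inl (Or.inl (Or.inr
                  ⟨pr, hpr, v, m, am, ?_, hamin, ?_, hvm, rfl⟩)))
                · rw [eγ]; exact hmin
                · rw [eγ]; exact hv
              have := (hcrit _ hp).1
              rw [eγ] at this
              exact this rfl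
          · push_neg at hex
            have hp : (mixB a b γ v, mixA a b γ v) ∈
                Wfield a b c (A ∩ B) WA WB WC :=
              Or.inr (Or.inr ⟨γ, hγ, hex, v, m, hmin, hv, hvm, rfl⟩)
            exact (hcrit _ hp).1 rfl
      · -- σ = γ.image a
        exact goalA ⟨γ, hγ.1, rfl⟩
    · exact goalB hT
  · rintro ((⟨hmem, hcard, hcritA⟩ | ⟨hmem, hcard, hcritB⟩) |
      ⟨q', hq, γ, ⟨hγcopy, hγcard, hγcr⟩, m, hm, rfl⟩)
    · refine ⟨Or.inl (Or.inl hmem), hcard, ?_⟩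
      rintro p ((hp | hp) | hp)
      · exact hcritA p hp
      · obtain ⟨h1, h2, -⟩ := hWBd p hp
        obtain ⟨δ1, hδ1, e1⟩ := h1
        obtain ⟨δ2, hδ2, e2⟩ := h2
        constructor
        · intro h
          obtain ⟨w, hw⟩ := hBne δ1 hδ1
          exact copy_no_b hab hmem w
            (by rw [← h, e1]; exact Finset.mem_image_of_mem b hw)
        · intro h
          obtain ⟨w, hw⟩ := hBne δ2 hδ2
          exact copy_no_b hab hmem w
            (by rw [← h, e2]; exact Finset.mem_image_of_mem b hw)
      · obtain ⟨-, ⟨w1, hw1⟩, -, ⟨w2, hw2⟩⟩ := Wprime_vertices hia hib hab hsubWC hp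
        exact ⟨fun h => copy_no_b hab hmem w1 (h ▸ hw1),
          fun h => copy_no_b hab hmem w2 (h ▸ hw2)⟩
    · refine ⟨Or.inr hmem, hcard, ?_⟩
      rintro p ((hp | hp) | hp)
      · obtain ⟨h1, h2, -⟩ := hWAd p hp
        obtain ⟨δ1, hδ1, e1⟩ := h1
        obtain ⟨δ2, hδ2, e2⟩ := h2
        constructor
        · intro h
          obtain ⟨w, hw⟩ := hAne δ1 hδ1
          exact copy_no_a hab hmem w
            (by rw [← h, e1]; exact Finset.mem_image_of_mem a hw)
        · intro h
          obtain ⟨w, hw⟩ := hAne δ2 hδ2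
          exact copy_no_a hab hmem w
            (by rw [← h, e2]; exact Finset.mem_image_of_mem a hw)
      · exact hcritB p hp
      · obtain ⟨⟨w1, hw1⟩, -, ⟨w2, hw2⟩, -⟩ := Wprime_vertices hia hib hab hsubWC hp
        exact ⟨fun h => copy_no_a hab hmem w1 (h ▸ hw1),
          fun h => copy_no_a hab hmem w2 (h ▸ hw2)⟩
    · -- σ = mixA a b γ m with γ.image c critical
      obtain ⟨δ, hδ, hδe⟩ := hγcopy
      have hγC : γ ∈ A ∩ B := by
        have : γ = δ := Finset.image_injective hic hδe
        rwa [this]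
      have hγm : m ∈ γ := hm.1
      have hbσ : b m ∈ mixA a b γ m := (b_mem_mixA hib hab).2 ⟨hγm, le_refl m⟩
      have haσ : a m ∈ mixA a b γ m := (a_mem_mixA hia hab).2 ⟨hγm, le_refl m⟩
      refine ⟨Or.inl (Or.inr (Set.mem_biUnion hγC (Or.inl ⟨m, hγm, rfl⟩))), ?_, ?_⟩
      · rw [card_mixA hia hib hab hγm]
        have : γ.card = q' + 1 := by
          rw [← Finset.card_image_of_injective γ hic]; exact hγcard
        omega
      · rintro p ((hp | hp) | hp)
        · obtain ⟨h1, h2, -⟩ := hWAd p hp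
          exact ⟨fun h => copy_no_b hab h1 m (by rw [h]; exact hbσ),
            fun h => copy_no_b hab h2 m (by rw [h]; exact hbσ)⟩
        · obtain ⟨h1, h2, -⟩ := hWBd p hp
          exact ⟨fun h => copy_no_a hab h1 m (by rw [h]; exact haσ),
            fun h => copy_no_a hab h2 m (by rw [h]; exact haσ)⟩
        · simp only [WprimeSet, Set.mem_union, Set.mem_setOf_eq] at hp
          rcases hp with ((⟨pr, hpr, w, hwmin, rfl⟩ |
              ⟨pr, hpr, w, wm, am, hwm, ham, hwmem, hwne, rfl⟩) |
              ⟨pr, hpr, w, am, ham, hw, hwne, rfl⟩) |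
              ⟨γ', hγ', hcr', w, wm, hwm, hw, hwne, rfl⟩
          · obtain ⟨e1, e2, hsub12, hne1, -, -⟩ := hPR pr hpr
            constructor
            · intro h
              obtain ⟨hγeq, -⟩ := mixA_inj hia hib hab hwmin.1 hγm h
              exact (hγcr pr hpr).1 (by rw [← e1, hγeq])
            · intro h
              obtain ⟨hγeq, -⟩ := mixA_inj hia hib hab (hsub12 hwmin.1) hγm h
              exact (hγcr pr hpr).2 (by rw [← e2, hγeq])
          · obtain ⟨e1, e2, hsub12, hne1, -, -⟩ := hPR pr hpr
            constructor
            · exact fun h => mixA_ne_mixB hia hib hab hγm h.symm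
            · intro h
              have hwin : (if w = am then wm else w) ∈ pull c pr.2 := by
                split_ifs
                · exact hwm.1
                · exact hwmem
              obtain ⟨hγeq, -⟩ := mixA_inj hia hib hab hwin hγm h
              exact (hγcr pr hpr).2 (by rw [← e2, hγeq])
          · obtain ⟨e1, e2, hsub12, hne1, -, -⟩ := hPR pr hpr
            constructor
            · exact fun h => mixA_ne_mixB hia hib hab hγm h.symm
            · intro h
              obtain ⟨hγeq, -⟩ := mixA_inj hia hib hab hw hγm h
              exact (hγcr pr hpr).1 (by rw [← e1, hγeq])
          · constructor
            · exact fun h => mixA_ne_mixB hia hib hab hγm h.symm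
            · intro h
              obtain ⟨hγeq, hveq⟩ := mixA_inj hia hib hab hw hγm h
              rw [hγeq] at hwm
              exact hwne (hveq.trans (isMin_unique hm hwm))

end DMT
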